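/- Let V = Λ_R(a, p_1, ..., p_N) and V' = Λ_R(b, c, p_1, ..., p_N) be exterior algebras over a commutative ring R. Define the 'split' map s : V → V' to be the R-algebra-induced linear map with s(π) = (b - c)π and s(aπ) = bcπ for every monomial π in the p_i. For elements w_q ∈ R (one for each generator p_q), let d = Σ_q w_q p_q ∧ (·) act on both V and V' by left multiplication. Then s ∘ d = - d ∘ s. -/
import Mathlib


/-- `Λ_R(a, p_1, ..., p_N)`: the exterior algebra on one circle `a` and `N` passive
circles `p_i` (generators indexed by `Unit ⊕ Fin N`). -/
abbrev VOne (R : Type*) [CommRing R] (N : ℕ) := ExteriorAlgebra R ((Unit ⊕ Fin N) → R)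

/-- `Λ_R(b, c, p_1, ..., p_N)`: the exterior algebra on two circles `b, c` and `N`
passive circles `p_i` (generators indexed by `Bool ⊕ Fin N`). -/
abbrev VTwo (R : Type*) [CommRing R] (N : ℕ) := ExteriorAlgebra R ((Bool ⊕ Fin N) → R)

variable (R : Type*) [CommRing R] (N : ℕ)

/-- The generator `a` of `Λ_R(a, p_•)`. -/
noncomputable def genA : VOne R N := ExteriorAlgebra.ι R (Pi.single (Sum.inl ()) 1)

/-- The generator `b` of `Λ_R(b, c, p_•)`. -/
noncomputable def genB : VTwo R N := ExteriorAlgebra.ι R (Pi.single (Sum.inl true) 1)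

/-- The generator `c` of `Λ_R(b, c, p_•)`. -/
noncomputable def genC : VTwo R N := ExteriorAlgebra.ι R (Pi.single (Sum.inl false) 1)

/-- The passive generator `p_i` of `Λ_R(a, p_•)`. -/
noncomputable def pOne (i : Fin N) : VOne R N := ExteriorAlgebra.ι R (Pi.single (Sum.inr i) 1)

/-- The passive generator `p_i` of `Λ_R(b, c, p_•)`. -/
noncomputable def pTwo (i : Fin N) : VTwo R N := ExteriorAlgebra.ι R (Pi.single (Sum.inr i) 1)

/-- The monomial `π = p_{l_1} ∧ ... ∧ p_{l_r}` in `Λ_R(a, p_•)`. -/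
noncomputable def monoOne (l : List (Fin N)) : VOne R N := (l.map (pOne R N)).prod

/-- The monomial `π = p_{l_1} ∧ ... ∧ p_{l_r}` in `Λ_R(b, c, p_•)`. -/
noncomputable def monoTwo (l : List (Fin N)) : VTwo R N := (l.map (pTwo R N)).prod

/-- The vertical differential `d = Σ_q w_q p_q ∧ ·` on `Λ_R(a, p_•)`. -/
noncomputable def dOne (w : Fin N → R) : VOne R N →ₗ[R] VOne R N :=
  LinearMap.mulLeft R (∑ q, w q • pOne R N q)

/-- The vertical differential `d = Σ_q w_q p_q ∧ ·` on `Λ_R(b, c, p_•)`. -/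
noncomputable def dTwo (w : Fin N → R) : VTwo R N →ₗ[R] VTwo R N :=
  LinearMap.mulLeft R (∑ q, w q • pTwo R N q)


section Aux
variable (R : Type*) [CommRing R] (N : ℕ)

lemma iota_swap {M : Type*} [AddCommGroup M] [Module R M] (x y : M) :
    ExteriorAlgebra.ι R x * ExteriorAlgebra.ι R y = -(ExteriorAlgebra.ι R y * ExteriorAlgebra.ι R x) :=
  eq_neg_of_add_eq_zero_left (ExteriorAlgebra.ι_add_mul_swap x y)

lemma monoOne_cons (q : Fin N) (l : List (Fin N)) :
    monoOne R N (q :: l) = pOne R N q * monoOne R N l := by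
  simp [monoOne]

lemma monoTwo_cons (q : Fin N) (l : List (Fin N)) :
    monoTwo R N (q :: l) = pTwo R N q * monoTwo R N l := by
  simp [monoTwo]

lemma monoOne_append (l l' : List (Fin N)) :
    monoOne R N (l ++ l') = monoOne R N l * monoOne R N l' := by
  simp [monoOne]

lemma pOne_mul_genA (q : Fin N) : pOne R N q * genA R N = -(genA R N * pOne R N q) :=
  iota_swap R _ _

lemma monoOne_mul_genA (l : List (Fin N)) :
    monoOne R N l * genA R N = ((-1 : ℤ) ^ l.length) • (genA R N * monoOne R N l) := by
  induction l with
  | nil => simp [monoOne]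
  | cons q l ih =>
    rw [monoOne_cons, mul_assoc, ih, mul_smul_comm, ← mul_assoc, pOne_mul_genA,
      neg_mul, mul_assoc, ← monoOne_cons]
    simp [pow_succ, mul_comm]

lemma pTwo_mul_bc (q : Fin N) :
    pTwo R N q * (genB R N * genC R N) = genB R N * genC R N * pTwo R N q := by
  simp only [pTwo, genB, genC]
  rw [← mul_assoc, iota_swap R (Pi.single (Sum.inr q) 1), neg_mul, mul_assoc,
    iota_swap R (Pi.single (Sum.inr q) 1), mul_neg, neg_neg, ← mul_assoc]

lemma pTwo_mul_bsubc (q : Fin N) :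
    pTwo R N q * (genB R N - genC R N) = -((genB R N - genC R N) * pTwo R N q) := by
  simp only [pTwo, genB, genC]
  rw [mul_sub, sub_mul, iota_swap R (Pi.single (Sum.inr q) 1) (Pi.single (Sum.inl true) 1),
    iota_swap R (Pi.single (Sum.inr q) 1) (Pi.single (Sum.inl false) 1)]
  abel

noncomputable def spanSet : Set (VOne R N) :=
  Set.range (monoOne R N) ∪ Set.range (fun l => genA R N * monoOne R N l)

lemma mem_spanSet_mul {x y : VOne R N} (hx : x ∈ spanSet R N) (hy : y ∈ spanSet R N) :
    x * y ∈ Submodule.span R (spanSet R N) := by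
  dsimp only [spanSet, Set.mem_union, Set.mem_range] at hx hy
  rcases hx with ⟨l, rfl⟩ | ⟨l, rfl⟩ <;> rcases hy with ⟨l', rfl⟩ | ⟨l', rfl⟩
  · exact Submodule.subset_span (Or.inl ⟨l ++ l', monoOne_append R N l l'⟩)
  · rw [← mul_assoc, monoOne_mul_genA, smul_mul_assoc, mul_assoc, ← monoOne_append]
    exact Submodule.smul_mem _ _ (Submodule.subset_span (Or.inr ⟨l ++ l', rfl⟩))
  · rw [mul_assoc, ← monoOne_append]
    exact Submodule.subset_span (Or.inr ⟨l ++ l', rfl⟩)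
  · have : monoOne R N l * (genA R N * monoOne R N l') =
        ((-1 : ℤ) ^ l.length) • (genA R N * monoOne R N (l ++ l')) := by
      rw [← mul_assoc, monoOne_mul_genA, smul_mul_assoc, mul_assoc, ← monoOne_append]
    show genA R N * monoOne R N l * (genA R N * monoOne R N l') ∈ _
    rw [mul_assoc, this, mul_smul_comm, ← mul_assoc]
    have hA : genA R N * genA R N = 0 := ExteriorAlgebra.ι_sq_zero _
    rw [hA, zero_mul, smul_zero]
    exact Submodule.zero_mem _

lemma span_spanSet_top : Submodule.span R (spanSet R N) = ⊤ := by
  rw [eq_top_iff]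
  rintro x -
  induction x using ExteriorAlgebra.induction with
  | algebraMap r =>
    have : (algebraMap R (VOne R N)) r = r • monoOne R N [] := by
      simp [monoOne, Algebra.algebraMap_eq_smul_one]
    rw [this]
    exact Submodule.smul_mem _ _ (Submodule.subset_span (Or.inl ⟨[], rfl⟩))
  | ι v =>
    have hv : v = ∑ i : Unit ⊕ Fin N, v i • (Pi.single i 1 : (Unit ⊕ Fin N) → R) := by
      funext j
      simp [Pi.single_apply, Finset.sum_apply]
    rw [hv, map_sum]
    refine Submodule.sum_mem _ fun i _ => ?_
    rw [map_smul]
    refine Submodule.smul_mem _ _ ?_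
    rcases i with i | q
    · refine Submodule.subset_span (Or.inr ⟨[], ?_⟩)
      simp [monoOne, genA]
    · exact Submodule.subset_span (Or.inl ⟨[q], by simp [monoOne, pOne]⟩)
  | mul x y hx hy =>
    have h : Submodule.span R (spanSet R N) * Submodule.span R (spanSet R N) ≤
        Submodule.span R (spanSet R N) := by
      rw [Submodule.span_mul_span]
      refine Submodule.span_le.mpr ?_
      rintro z ⟨a, ha, b, hb, rfl⟩
      exact mem_spanSet_mul R N ha hb
    exact h (Submodule.mul_mem_mul hx hy)
  | add x y hx hy => exact Submodule.add_mem _ hx hy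

end Aux
/-- Let `s : Λ_R(a,p_•) → Λ_R(b,c,p_•)` be the R-linear 'split' map with
`s(π) = (b - c)π` and `s(aπ) = bcπ` for every monomial `π` in the `p_i`, and let
`d = Σ_q w_q p_q ∧ ·` act on both sides.  Then `s ∘ d = - d ∘ s`. -/
theorem split_anticommutes_with_vertical (w : Fin N → R)
    (s : VOne R N →ₗ[R] VTwo R N)
    (hs₁ : ∀ l : List (Fin N),
      s (monoOne R N l) = (genB R N - genC R N) * monoTwo R N l)
    (hs₂ : ∀ l : List (Fin N),
      s (genA R N * monoOne R N l) = genB R N * genC R N * monoTwo R N l) :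
    s ∘ₗ dOne R N w = - (dTwo R N w ∘ₗ s) := by
  apply LinearMap.ext_on (span_spanSet_top R N)
  rintro x (⟨l, rfl⟩ | ⟨l, rfl⟩) <;>
    simp only [LinearMap.comp_apply, LinearMap.neg_apply, dOne, dTwo, LinearMap.mulLeft_apply,
      Finset.sum_mul, smul_mul_assoc, map_sum, map_smul]
  · rw [hs₁ l, ← Finset.sum_neg_distrib]
    refine Finset.sum_congr rfl fun q _ => ?_
    rw [← monoOne_cons, hs₁, monoTwo_cons, ← smul_neg]
    congr 1
    rw [← mul_assoc, ← mul_assoc, pTwo_mul_bsubc, neg_mul, neg_neg]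
  · rw [hs₂ l, ← Finset.sum_neg_distrib]
    refine Finset.sum_congr rfl fun q _ => ?_
    have h1 : pOne R N q * (genA R N * monoOne R N l) = -(genA R N * monoOne R N (q :: l)) := by
      rw [← mul_assoc, pOne_mul_genA, neg_mul, mul_assoc, ← monoOne_cons]
    rw [h1, map_neg, hs₂, smul_neg, monoTwo_cons]
    congr 2
    rw [← mul_assoc, ← mul_assoc, pTwo_mul_bc]
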